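/- arXiv:1705.02188 — 6 statements merged into one kernel-verified Lean document; each statement's English description precedes it below -/
import Mathlib

section
/- For every real x ≥ 1 and every p ∈ (0,1], one has ((x+1)/2)^(p−1)·(x−1) ≤ (x^p − 1)/p. -/
/-!
`t ↦ t ^ (p - 1)` is convex since `p - 1 ≤ 0`, and its integral over `[1, x]` is `(x ^ p - 1) / p`,
so the claim is the left Hermite–Hadamard inequality for it. That inequality follows by integrating
`f ((a + b) / 2) ≤ (f t + f (a + b - t)) / 2` over `[a, b]`.
-/

open Real Set intervalIntegral

theorem convexOn_rpow_of_nonpos {q : ℝ} (hq : q ≤ 0) :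
    ConvexOn ℝ (Ioi 0) fun t : ℝ ↦ t ^ q := by
  have hlog : ConvexOn ℝ (Ioi 0) fun t ↦ log t * q := by
    simpa [smul_eq_mul, mul_comm] using
      strictConcaveOn_log_Ioi.concaveOn.neg.smul (neg_nonneg.2 hq)
  refine ⟨convex_Ioi 0, fun x hx y hy a b ha hb hab ↦ ?_⟩
  have hxy : 0 < a * x + b * y := convex_Ioi (0 : ℝ) hx hy ha hb hab
  simp only [smul_eq_mul, rpow_def_of_pos hx, rpow_def_of_pos hy, rpow_def_of_pos hxy]
  calc exp (log (a * x + b * y) * q) ≤ exp (a * (log x * q) + b * (log y * q)) :=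
        exp_le_exp.2 (hlog.2 hx hy ha hb hab)
    _ ≤ a * exp (log x * q) + b * exp (log y * q) := convexOn_exp.2 trivial trivial ha hb hab

theorem ConvexOn.map_midpoint_mul_le_integral {f : ℝ → ℝ} {a b : ℝ} (hab : a ≤ b)
    (hf : ConvexOn ℝ (Icc a b) f) (hfi : IntervalIntegrable f MeasureTheory.volume a b) :
    f ((a + b) / 2) * (b - a) ≤ ∫ t in a..b, f t := by
  have hfi' : IntervalIntegrable (fun t ↦ f (a + b - t)) MeasureTheory.volume a b := by
    simpa using (hfi.comp_sub_left (a + b)).symm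
  have hmid : ∀ t ∈ Icc a b, f ((a + b) / 2) ≤ (f t + f (a + b - t)) / 2 := by
    intro t ht
    have hreflect : a + b - t ∈ Icc a b := ⟨by linarith [ht.2], by linarith [ht.1]⟩
    calc f ((a + b) / 2) = f ((1 / 2 : ℝ) • t + (1 / 2 : ℝ) • (a + b - t)) := by
          rw [smul_eq_mul, smul_eq_mul]; ring_nf
      _ ≤ (1 / 2 : ℝ) • f t + (1 / 2 : ℝ) • f (a + b - t) :=
          hf.2 ht hreflect (by norm_num) (by norm_num) (by norm_num)
      _ = (f t + f (a + b - t)) / 2 := by rw [smul_eq_mul, smul_eq_mul]; ring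
  calc f ((a + b) / 2) * (b - a) = ∫ _ in a..b, f ((a + b) / 2) := by simp [mul_comm]
    _ ≤ ∫ t in a..b, (f t + f (a + b - t)) / 2 :=
      integral_mono_on hab intervalIntegrable_const ((hfi.add hfi').div_const 2) hmid
    _ = ∫ t in a..b, f t := by
      rw [integral_div, integral_add hfi hfi', integral_comp_sub_left, add_sub_cancel_left,
        add_sub_cancel_right]
      ring

theorem stmt0 (x p : ℝ) (hx : 1 ≤ x) (hp0 : 0 < p) (hp1 : p ≤ 1) :
    ((x + 1) / 2) ^ (p - 1) * (x - 1) ≤ (x ^ p - 1) / p := by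
  have hconv : ConvexOn ℝ (Icc 1 x) fun t : ℝ ↦ t ^ (p - 1) :=
    (convexOn_rpow_of_nonpos (by linarith)).subset (fun t ht ↦ zero_lt_one.trans_le ht.1)
      (convex_Icc 1 x)
  have hintegral : ∫ t in (1 : ℝ)..x, t ^ (p - 1) = (x ^ p - 1) / p := by
    rw [integral_rpow (Or.inl (by linarith)), sub_add_cancel, one_rpow]
  have hHH := hconv.map_midpoint_mul_le_integral hx (intervalIntegrable_rpow' (by linarith))
  rwa [add_comm 1 x, hintegral] at hHH
end

section
/- For every real x ≥ 1 and every p ∈ (0,1], one has (1/24)·(p−1)·(p−2)·x^(p−3)·(x−1)^3 + ((x+1)/2)^(p−1)·(x−1) ≤ (x^p − 1)/p ≤ (1/24)·(p−1)·(p−2)·(x−1)^3 + ((x+1)/2)^(p−1)·(x−1). -/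
open intervalIntegral Real MeasureTheory

lemma aux_int (a b c r : ℝ) (ha : 0 < a) (hab : a ≤ b)
    (h1 : r + 1 ≠ 0) (h2 : r + 2 ≠ 0) (h3 : r + 3 ≠ 0) :
    ∫ t in a..b, t ^ r * (t - c) ^ 2 =
      (b ^ (r + 3) - a ^ (r + 3)) / (r + 3)
      - 2 * c * ((b ^ (r + 2) - a ^ (r + 2)) / (r + 2))
      + c ^ 2 * ((b ^ (r + 1) - a ^ (r + 1)) / (r + 1)) := by
  have h0 : (0 : ℝ) ∉ Set.uIcc a b := by
    rw [Set.uIcc_of_le hab]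
    rintro ⟨h, -⟩; linarith
  have hco : ∀ s : ℝ, IntervalIntegrable (fun t : ℝ => t ^ s) volume a b :=
    fun s => intervalIntegrable_rpow (Or.inr h0)
  have heq : Set.EqOn (fun t : ℝ => t ^ r * (t - c) ^ 2)
      (fun t : ℝ => t ^ (r + 2) - 2 * c * t ^ (r + 1) + c ^ 2 * t ^ r) (Set.uIcc a b) := by
    intro t ht
    have ht0 : 0 < t := by
      rw [Set.uIcc_of_le hab] at ht; linarith [ht.1]
    have e1 : t ^ (r + 1) = t ^ r * t := Real.rpow_add_one ht0.ne' r
    have e2 : t ^ (r + 2) = t ^ (r + 1) * t := by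
      rw [show r + 2 = (r + 1) + 1 by ring, Real.rpow_add_one ht0.ne']
    simp only [e2, e1]; ring
  rw [intervalIntegral.integral_congr heq,
    intervalIntegral.integral_add (((hco _).sub (((hco _).const_mul _)))) ((hco _).const_mul _),
    intervalIntegral.integral_sub (hco _) ((hco _).const_mul _),
    intervalIntegral.integral_const_mul, intervalIntegral.integral_const_mul,
    integral_rpow (Or.inr ⟨by intro h; apply h3; linarith, h0⟩),
    integral_rpow (Or.inr ⟨by intro h; apply h2; linarith, h0⟩),
    integral_rpow (Or.inr ⟨by intro h; apply h1; linarith, h0⟩)]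
  ring_nf

lemma aux_bounds (a b c lo r : ℝ) (ha : 1 ≤ a) (hab : a ≤ b)
    (hr : r ≤ 0) (hlo : ∀ t ∈ Set.Icc a b, lo ≤ t ^ r) :
    lo * ∫ t in a..b, (t - c) ^ 2 ≤ (∫ t in a..b, t ^ r * (t - c) ^ 2)
      ∧ (∫ t in a..b, t ^ r * (t - c) ^ 2) ≤ ∫ t in a..b, (t - c) ^ 2 := by
  have h0 : (0 : ℝ) ∉ Set.uIcc a b := by
    rw [Set.uIcc_of_le hab]
    rintro ⟨h, -⟩; linarith
  have hi1 : IntervalIntegrable (fun t : ℝ => t ^ r * (t - c) ^ 2) volume a b :=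
    (intervalIntegrable_rpow (Or.inr h0)).mul_continuousOn (by fun_prop)
  have hi2 : IntervalIntegrable (fun t : ℝ => (t - c) ^ 2) volume a b := by
    apply Continuous.intervalIntegrable; fun_prop
  constructor
  · rw [← intervalIntegral.integral_const_mul]
    apply intervalIntegral.integral_mono_on hab (hi2.const_mul lo) hi1
    intro t ht
    have : lo ≤ t ^ r := hlo t ht
    nlinarith [sq_nonneg (t - c)]
  · apply intervalIntegral.integral_mono_on hab hi1 hi2
    intro t ht
    have h1 : t ^ r ≤ 1 := Real.rpow_le_one_of_one_le_of_nonpos (le_trans ha ht.1) hr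
    nlinarith [sq_nonneg (t - c)]

lemma aux_sq_int (a b c : ℝ) : ∫ t in a..b, (t - c) ^ 2 = ((b - c) ^ 3 - (a - c) ^ 3) / 3 := by
  have := intervalIntegral.integral_comp_sub_right (fun u : ℝ => u ^ (2 : ℕ)) c (a := a) (b := b)
  rw [this, integral_pow]
  norm_num

theorem stmt5 (x p : ℝ) (hx : 1 ≤ x) (hp0 : 0 < p) (hp1 : p ≤ 1) :
    (1 / 24) * (p - 1) * (p - 2) * x ^ (p - 3) * (x - 1) ^ (3 : ℕ)
        + ((x + 1) / 2) ^ (p - 1) * (x - 1) ≤ (x ^ p - 1) / p ∧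
    (x ^ p - 1) / p ≤ (1 / 24) * (p - 1) * (p - 2) * (x - 1) ^ (3 : ℕ)
        + ((x + 1) / 2) ^ (p - 1) * (x - 1) := by
  rcases eq_or_lt_of_le hp1 with rfl | hplt
  · norm_num [Real.rpow_one]
  have hx0 : (0 : ℝ) < x := by linarith
  have hm0 : (0 : ℝ) < (x + 1) / 2 := by linarith
  have hm1 : (1 : ℝ) ≤ (x + 1) / 2 := by linarith
  have hmx : (x + 1) / 2 ≤ x := by linarith
  have hp1' : p - 1 ≠ 0 := by intro h; linarith
  have hp2' : p - 2 ≠ 0 := by intro h; linarith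
  have hp3 : p - 3 ≤ 0 := by linarith
  -- closed forms
  have e1 : ∫ t in (1:ℝ)..((x + 1) / 2), t ^ (p - 3) * (t - 1) ^ 2 =
      (((x + 1) / 2) ^ p - 1) / p - 2 * 1 * ((((x + 1) / 2) ^ (p - 1) - 1) / (p - 1))
        + 1 ^ 2 * ((((x + 1) / 2) ^ (p - 2) - 1) / (p - 2)) := by
    have := aux_int 1 ((x + 1) / 2) 1 (p - 3) one_pos hm1 (by intro h; apply hp2'; linarith)
      (by intro h; apply hp1'; linarith) (by intro h; exact hp0.ne' (by linarith))
    rw [this]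
    norm_num [Real.one_rpow]
    ring_nf
  have e2 : ∫ t in ((x + 1) / 2)..x, t ^ (p - 3) * (t - x) ^ 2 =
      (x ^ p - ((x + 1) / 2) ^ p) / p - 2 * x * ((x ^ (p - 1) - ((x + 1) / 2) ^ (p - 1)) / (p - 1))
        + x ^ 2 * ((x ^ (p - 2) - ((x + 1) / 2) ^ (p - 2)) / (p - 2)) := by
    have := aux_int ((x + 1) / 2) x x (p - 3) hm0 hmx (by intro h; apply hp2'; linarith)
      (by intro h; apply hp1'; linarith) (by intro h; exact hp0.ne' (by linarith))
    rw [this]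
    ring_nf
  -- identity
  have key : (x ^ p - 1) / p - ((x + 1) / 2) ^ (p - 1) * (x - 1) =
      (p - 1) * (p - 2) / 2 * ((∫ t in (1:ℝ)..((x + 1) / 2), t ^ (p - 3) * (t - 1) ^ 2)
        + ∫ t in ((x + 1) / 2)..x, t ^ (p - 3) * (t - x) ^ 2) := by
    rw [e1, e2]
    have hxp : x ^ p = x ^ (p - 2) * x * x := by
      rw [show p = (p - 2) + 1 + 1 by ring, Real.rpow_add_one hx0.ne', Real.rpow_add_one hx0.ne',
        show p - 2 + 1 + 1 - 2 = p - 2 by ring]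
    have hxp1 : x ^ (p - 1) = x ^ (p - 2) * x := by
      rw [show p - 1 = (p - 2) + 1 by ring, Real.rpow_add_one hx0.ne']
    have hmp : ((x + 1) / 2) ^ p = ((x + 1) / 2) ^ (p - 2) * ((x + 1) / 2) * ((x + 1) / 2) := by
      rw [show p = (p - 2) + 1 + 1 by ring, Real.rpow_add_one hm0.ne', Real.rpow_add_one hm0.ne',
        show p - 2 + 1 + 1 - 2 = p - 2 by ring]
    have hmp1 : ((x + 1) / 2) ^ (p - 1) = ((x + 1) / 2) ^ (p - 2) * ((x + 1) / 2) := by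
      rw [show p - 1 = (p - 2) + 1 by ring, Real.rpow_add_one hm0.ne']
    rw [hxp, hxp1, hmp, hmp1]
    field_simp
    ring
  -- bounds
  have hlo1 : ∀ t ∈ Set.Icc (1:ℝ) ((x + 1) / 2), x ^ (p - 3) ≤ t ^ (p - 3) := by
    intro t ht
    exact Real.rpow_le_rpow_of_nonpos (by linarith [ht.1]) (le_trans ht.2 hmx) hp3
  have hlo2 : ∀ t ∈ Set.Icc ((x + 1) / 2) x, x ^ (p - 3) ≤ t ^ (p - 3) := by
    intro t ht
    exact Real.rpow_le_rpow_of_nonpos (by linarith [ht.1]) ht.2 hp3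
  have B1 := aux_bounds 1 ((x + 1) / 2) 1 (x ^ (p - 3)) (p - 3) le_rfl hm1 hp3 hlo1
  have B2 := aux_bounds ((x + 1) / 2) x x (x ^ (p - 3)) (p - 3) hm1 hmx hp3 hlo2
  rw [aux_sq_int] at B1 B2
  have hs1 : (((x + 1) / 2 - 1) ^ 3 - (1 - 1) ^ 3) / 3 = (x - 1) ^ 3 / 24 := by ring
  have hs2 : ((x - x) ^ 3 - ((x + 1) / 2 - x) ^ 3) / 3 = (x - 1) ^ 3 / 24 := by ring
  rw [hs1] at B1
  rw [hs2] at B2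
  have hK : 0 ≤ (p - 1) * (p - 2) := by nlinarith
  obtain ⟨B1l, B1u⟩ := B1
  obtain ⟨B2l, B2u⟩ := B2
  have hK2 : 0 ≤ (p - 1) * (p - 2) / 2 := by linarith
  constructor
  · have h := add_le_add B1l B2l
    have h2 := mul_le_mul_of_nonneg_left h hK2
    have goal1 : (1 / 24) * (p - 1) * (p - 2) * x ^ (p - 3) * (x - 1) ^ (3 : ℕ) ≤
        (p - 1) * (p - 2) / 2 * ((∫ t in (1:ℝ)..((x + 1) / 2), t ^ (p - 3) * (t - 1) ^ 2)
          + ∫ t in ((x + 1) / 2)..x, t ^ (p - 3) * (t - x) ^ 2) := by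
      calc (1 / 24) * (p - 1) * (p - 2) * x ^ (p - 3) * (x - 1) ^ (3 : ℕ)
          = (p - 1) * (p - 2) / 2 * (x ^ (p - 3) * ((x - 1) ^ 3 / 24)
            + x ^ (p - 3) * ((x - 1) ^ 3 / 24)) := by ring
        _ ≤ _ := h2
    linarith [key, goal1]
  · have h := add_le_add B1u B2u
    have h2 := mul_le_mul_of_nonneg_left h hK2
    have goal2 : (p - 1) * (p - 2) / 2 * ((∫ t in (1:ℝ)..((x + 1) / 2), t ^ (p - 3) * (t - 1) ^ 2)
          + ∫ t in ((x + 1) / 2)..x, t ^ (p - 3) * (t - x) ^ 2) ≤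
        (1 / 24) * (p - 1) * (p - 2) * (x - 1) ^ (3 : ℕ) := by
      calc (p - 1) * (p - 2) / 2 * ((∫ t in (1:ℝ)..((x + 1) / 2), t ^ (p - 3) * (t - 1) ^ 2)
          + ∫ t in ((x + 1) / 2)..x, t ^ (p - 3) * (t - x) ^ 2)
          ≤ (p - 1) * (p - 2) / 2 * ((x - 1) ^ 3 / 24 + (x - 1) ^ 3 / 24) := h2
        _ = (1 / 24) * (p - 1) * (p - 2) * (x - 1) ^ (3 : ℕ) := by ring
    linarith [key, goal2]
end

section
/- For every real x ≥ 1 and every p ∈ (0,1], one has ((x^(p−1) + 1)/2)·(x−1) − (1/12)·(p−1)·(p−2)·(x−1)^3 ≤ (x^p − 1)/p ≤ ((x^(p−1) + 1)/2)·(x−1) − (1/12)·(p−1)·(p−2)·x^(p−3)·(x−1)^3. -/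
/-!
Apply the trapezoid-rule error bound `m (b - a)³ / 12 ≤ (f a + f b) / 2 · (b - a) - ∫_a^b f ≤
M (b - a)³ / 12`, valid when `m ≤ f'' ≤ M` on `[a, b]`, to `f t = t ^ (p - 1)` on `[1, x]`.
Since `f'' t = (p - 1) (p - 2) t ^ (p - 3)` with `(p - 1) (p - 2) ≥ 0` and `p - 3 < 0`, `f''` lies
between its values at `x` and at `1`.

For the error bound itself: the trapezoid error on `[a, s]`, minus `m (s - a)³ / 12`, vanishes to
second order at `s = a` and has second derivative `(f'' s - m) (s - a) / 2 ≥ 0`.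
-/

open Set

theorem monotoneOn_Icc_of_hasDerivAt_nonneg {f f' : ℝ → ℝ} {a b : ℝ}
    (hf : ∀ t ∈ Icc a b, HasDerivAt f (f' t) t) (hf' : ∀ t ∈ Icc a b, 0 ≤ f' t) :
    MonotoneOn f (Icc a b) :=
  monotoneOn_of_hasDerivWithinAt_nonneg (convex_Icc a b)
    (fun t ht => (hf t ht).continuousAt.continuousWithinAt)
    (fun t ht => (hf t (interior_subset ht)).hasDerivWithinAt)
    (fun t ht => hf' t (interior_subset ht))

section Trapezoid

variable {F f f' f'' : ℝ → ℝ} {a b : ℝ}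

theorem trapezoid_error_ge {m : ℝ} (hab : a ≤ b)
    (hF : ∀ t ∈ Icc a b, HasDerivAt F (f t) t) (hf : ∀ t ∈ Icc a b, HasDerivAt f (f' t) t)
    (hf' : ∀ t ∈ Icc a b, HasDerivAt f' (f'' t) t) (hm : ∀ t ∈ Icc a b, m ≤ f'' t) :
    m * (b - a) ^ 3 / 12 ≤ (f a + f b) / 2 * (b - a) - (F b - F a) := by
  have ha : a ∈ Icc a b := left_mem_Icc.2 hab
  have hE' : ∀ t ∈ Icc a b, HasDerivAt
      (fun s => (f' s * (s - a) - (f s - f a)) / 2 - m * (s - a) ^ 2 / 4)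
      ((f'' t - m) * (t - a) / 2) t := by
    intro t ht
    refine (((((hf' t ht).mul ((hasDerivAt_id' t).sub_const a)).sub
      ((hf t ht).sub_const (f a))).div_const 2).sub
      ((((hasDerivAt_id' t).sub_const a).pow 2).const_mul m |>.div_const 4)).congr_deriv ?_
    push_cast
    ring
  have hE : ∀ t ∈ Icc a b, HasDerivAt
      (fun s => (f a + f s) / 2 * (s - a) - (F s - F a) - m * (s - a) ^ 3 / 12)
      ((f' t * (t - a) - (f t - f a)) / 2 - m * (t - a) ^ 2 / 4) t := by
    intro t ht
    refine ((((((hf t ht).const_add (f a)).div_const 2).mul ((hasDerivAt_id' t).sub_const a)).sub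
      ((hF t ht).sub_const (F a))).sub
      ((((hasDerivAt_id' t).sub_const a).pow 3).const_mul m |>.div_const 12)).congr_deriv ?_
    push_cast
    ring
  have hE'_nonneg : ∀ t ∈ Icc a b,
      0 ≤ (f' t * (t - a) - (f t - f a)) / 2 - m * (t - a) ^ 2 / 4 := by
    intro t ht
    have := monotoneOn_Icc_of_hasDerivAt_nonneg hE'
      (fun s hs => div_nonneg (mul_nonneg (sub_nonneg.2 (hm s hs)) (sub_nonneg.2 hs.1))
        zero_le_two) ha ht ht.1
    simpa using this
  have hEb := monotoneOn_Icc_of_hasDerivAt_nonneg hE hE'_nonneg ha (right_mem_Icc.2 hab) hab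
  simp only [sub_self] at hEb
  linarith

theorem trapezoid_error_le {M : ℝ} (hab : a ≤ b)
    (hF : ∀ t ∈ Icc a b, HasDerivAt F (f t) t) (hf : ∀ t ∈ Icc a b, HasDerivAt f (f' t) t)
    (hf' : ∀ t ∈ Icc a b, HasDerivAt f' (f'' t) t) (hM : ∀ t ∈ Icc a b, f'' t ≤ M) :
    (f a + f b) / 2 * (b - a) - (F b - F a) ≤ M * (b - a) ^ 3 / 12 := by
  have := trapezoid_error_ge (F := -F) (f := -f) (f' := -f') (f'' := -f'') (m := -M) hab
    (fun t ht => (hF t ht).neg) (fun t ht => (hf t ht).neg) (fun t ht => (hf' t ht).neg)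
    (fun t ht => neg_le_neg (hM t ht))
  simp only [Pi.neg_apply] at this
  linarith

end Trapezoid

theorem stmt6 (x p : ℝ) (hx : 1 ≤ x) (hp0 : 0 < p) (hp1 : p ≤ 1) :
    ((x ^ (p - 1) + 1) / 2) * (x - 1) - (1 / 12) * (p - 1) * (p - 2) * (x - 1) ^ (3 : ℕ)
        ≤ (x ^ p - 1) / p ∧
    (x ^ p - 1) / p ≤ ((x ^ (p - 1) + 1) / 2) * (x - 1)
        - (1 / 12) * (p - 1) * (p - 2) * x ^ (p - 3) * (x - 1) ^ (3 : ℕ) := by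
  have hc : 0 ≤ (p - 1) * (p - 2) := by nlinarith
  have hpos : ∀ t ∈ Icc 1 x, t ≠ 0 := fun t ht => (zero_lt_one.trans_le ht.1).ne'
  have hF : ∀ t ∈ Icc 1 x, HasDerivAt (fun s => s ^ p / p) (t ^ (p - 1)) t := fun t ht =>
    ((Real.hasDerivAt_rpow_const (Or.inl (hpos t ht))).div_const p).congr_deriv
      (by field_simp)
  have hf : ∀ t ∈ Icc 1 x, HasDerivAt (fun s => s ^ (p - 1)) ((p - 1) * t ^ (p - 2)) t :=
    fun t ht => (Real.hasDerivAt_rpow_const (Or.inl (hpos t ht))).congr_deriv (by ring_nf)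
  have hf' : ∀ t ∈ Icc 1 x,
      HasDerivAt (fun s => (p - 1) * s ^ (p - 2)) ((p - 1) * (p - 2) * t ^ (p - 3)) t :=
    fun t ht => ((Real.hasDerivAt_rpow_const (Or.inl (hpos t ht))).const_mul (p - 1)).congr_deriv
      (by ring_nf)
  have lower := trapezoid_error_ge hx hF hf hf' (m := (p - 1) * (p - 2) * x ^ (p - 3))
    fun t ht => mul_le_mul_of_nonneg_left
      (Real.rpow_le_rpow_of_nonpos (zero_lt_one.trans_le ht.1) ht.2 (by linarith)) hc
  have upper := trapezoid_error_le hx hF hf hf' (M := (p - 1) * (p - 2))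
    fun t ht => mul_le_of_le_one_right hc (Real.rpow_le_one_of_one_le_of_nonpos ht.1 (by linarith))
  simp only [Real.one_rpow] at lower upper
  rw [sub_div]
  constructor <;> linarith
end

section
/- Let A and B be n×n complex positive definite matrices with A ≤ B in the Loewner order, and let p ∈ (0,1]. Then K_p(A,B) ≤ T_p(A|B) ≤ (1/2)·(A #_p B − A ♮_{p−1} B + B − A) in the Loewner order. -/
open Matrix ComplexOrder

/-- Real power of a (Hermitian) complex matrix via the continuous functional calculus,
corresponding to `Matrix.PosDef.rpow` on positive definite matrices. -/
noncomputable def mrpow {n : Type*} [Fintype n] [DecidableEq n]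
    (A : Matrix n n ℂ) (r : ℝ) : Matrix n n ℂ :=
  cfc (fun t : ℝ => t ^ r) A

/-- The Loewner order: `loe X Y` means `Y - X` is positive semidefinite. -/
def loe {n : Type*} [Fintype n] (X Y : Matrix n n ℂ) : Prop :=
  (Y - X).PosSemidef

/-- `A ♮ᵣ B = A^{1/2} (A^{-1/2} B A^{-1/2})^r A^{1/2}`; for `r ∈ [0,1]` this is the
weighted geometric mean `A #ᵣ B`. -/
noncomputable def natu {n : Type*} [Fintype n] [DecidableEq n]
    (A B : Matrix n n ℂ) (r : ℝ) : Matrix n n ℂ :=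
  mrpow A (1 / 2) * mrpow (mrpow A (-(1 / 2)) * B * mrpow A (-(1 / 2))) r * mrpow A (1 / 2)

/-- The Tsallis relative operator entropy `T_p(A|B) = (A #_p B - A) / p`. -/
noncomputable def TsallisEntropy {n : Type*} [Fintype n] [DecidableEq n]
    (A B : Matrix n n ℂ) (p : ℝ) : Matrix n n ℂ :=
  (1 / p : ℝ) • (natu A B p - A)

/-- `K_p(A,B) = A^{1/2} ((A^{-1/2} B A^{-1/2} + I)/2)^{p-1} (A^{-1/2} B A^{-1/2} - I) A^{1/2}`. -/
noncomputable def Kp {n : Type*} [Fintype n] [DecidableEq n]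
    (A B : Matrix n n ℂ) (p : ℝ) : Matrix n n ℂ :=
  mrpow A (1 / 2) *
    mrpow ((1 / 2 : ℝ) • (mrpow A (-(1 / 2)) * B * mrpow A (-(1 / 2)) + 1)) (p - 1) *
    (mrpow A (-(1 / 2)) * B * mrpow A (-(1 / 2)) - 1) * mrpow A (1 / 2)

/-!
With `C = A^{-1/2} B A^{-1/2}` we have `1 ≤ C`, and the congruence `X ↦ A^{1/2} X A^{1/2}`,
which is linear and monotone, sends `1`, `C`, `C^r` to `A`, `B`, `A ♮_r B`. All three matrices
are therefore images of functions of `C`, and it suffices to compare those functions on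
`[1, ∞)`. Since `(x^p - 1)/p = ∫₁ˣ t^{p-1} dt`, the two scalar inequalities are the midpoint
and trapezoid bounds for the convex function `t^{p-1}`; we prove them by differentiating in `x`
and using the tangent-line inequality for `t^{p-1}`.
-/

open scoped MatrixOrder

lemma le_of_hasDerivAt_of_nonneg_Ici {F F' : ℝ → ℝ} {a x : ℝ}
    (hF : ∀ y, a ≤ y → HasDerivAt F (F' y) y) (hF' : ∀ y, a < y → 0 ≤ F' y) (hx : a ≤ x) :
    F a ≤ F x := by
  refine monotoneOn_of_hasDerivWithinAt_nonneg (convex_Ici a)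
    (fun y hy => (hF y hy).continuousAt.continuousWithinAt)
    (fun y hy => (hF y (interior_subset hy)).hasDerivWithinAt) (fun y hy => hF' y ?_)
    Set.self_mem_Ici hx hx
  simpa using hy

namespace Real

lemma one_add_mul_sub_one_le_rpow {q u : ℝ} (hq0 : -1 ≤ q) (hq1 : q ≤ 0) (hu : 0 < u) :
    1 + q * (u - 1) ≤ u ^ q := by
  -- Bernoulli for the exponent `-q ∈ [0, 1]`, then multiply by `1 + q (u - 1)`.
  have hv : 0 < u ^ q := rpow_pos_of_pos hu q
  have hB : u ^ (-q) ≤ 1 + -q * (u - 1) := by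
    simpa using rpow_one_add_le_one_add_mul_self (s := u - 1) (by linarith) (p := -q)
      (by linarith) (by linarith)
  rw [rpow_neg hu.le, inv_le_iff_one_le_mul₀' hv] at hB
  rcases le_or_gt (1 + q * (u - 1)) 0 with h | h
  · linarith
  · nlinarith [mul_le_mul_of_nonneg_left hB h.le, mul_nonneg hv.le (sq_nonneg (q * (u - 1)))]

lemma rpow_add_mul_rpow_sub_one_mul_sub_le {q a b : ℝ} (hq0 : -1 ≤ q) (hq1 : q ≤ 0)
    (ha : 0 < a) (hb : 0 < b) : a ^ q + q * a ^ (q - 1) * (b - a) ≤ b ^ q := by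
  have h := mul_le_mul_of_nonneg_right (one_add_mul_sub_one_le_rpow hq0 hq1 (div_pos hb ha))
    (rpow_pos_of_pos ha q).le
  rw [← mul_rpow (div_pos hb ha).le ha.le, div_mul_cancel₀ _ ha.ne'] at h
  rw [rpow_sub_one ha.ne']
  refine (le_of_eq ?_).trans h
  field_simp

lemma half_add_one_rpow_mul_sub_one_le {p x : ℝ} (hp0 : 0 < p) (hp1 : p ≤ 1) (hx : 1 ≤ x) :
    ((x + 1) / 2) ^ (p - 1) * (x - 1) ≤ (x ^ p - 1) / p := by
  have key := le_of_hasDerivAt_of_nonneg_Ici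
    (F := fun y => (y ^ p - 1) / p - ((y + 1) / 2) ^ (p - 1) * (y - 1))
    (F' := fun y => y ^ (p - 1) - (((y + 1) / 2) ^ (p - 1) +
      (p - 1) * ((y + 1) / 2) ^ (p - 1 - 1) * (y - (y + 1) / 2)))
    (fun y hy => ?_) (fun y hy => sub_nonneg.2 <|
      rpow_add_mul_rpow_sub_one_mul_sub_le (by linarith) (by linarith) (by linarith) (by linarith))
    hx
  · simp only [one_rpow, sub_self, zero_div, mul_zero] at key
    linarith
  · have hpow := (hasDerivAt_rpow_const (x := y) (p := p) (Or.inl (by linarith))).sub_const 1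
    have hmid := ((((hasDerivAt_id' y).add_const 1).div_const 2).rpow_const (p := p - 1)
      (Or.inl (by linarith))).mul ((hasDerivAt_id' y).sub_const 1)
    refine ((hpow.div_const p).sub hmid).congr_deriv ?_
    field_simp
    ring

lemma rpow_sub_one_div_le_half_rpow_sub_rpow_add {p x : ℝ} (hp0 : 0 < p) (hp1 : p ≤ 1)
    (hx : 1 ≤ x) : (x ^ p - 1) / p ≤ (x ^ p - x ^ (p - 1) + x - 1) / 2 := by
  have key := le_of_hasDerivAt_of_nonneg_Ici
    (F := fun y => (y ^ p - y ^ (p - 1) + y - 1) / 2 - (y ^ p - 1) / p)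
    (F' := fun y => (p * y ^ (p - 1) - (p - 1) * y ^ (p - 1 - 1) + 1) / 2 - y ^ (p - 1))
    (fun y hy => ?_) (fun y hy => ?_) hx
  · simp only [one_rpow, sub_self, zero_div] at key
    linarith
  · have hpow := hasDerivAt_rpow_const (x := y) (p := p) (Or.inl (by linarith))
    have hpow' := hasDerivAt_rpow_const (x := y) (p := p - 1) (Or.inl (by linarith))
    refine (((((hpow.sub hpow').add (hasDerivAt_id' y)).sub_const 1).div_const 2).sub
      ((hpow.sub_const 1).div_const p)).congr_deriv ?_
    field_simp
  · have hy0 : 0 < y := by linarith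
    have htan := rpow_add_mul_rpow_sub_one_mul_sub_le (q := p - 1) (by linarith) (by linarith)
      hy0 one_pos
    rw [one_rpow] at htan
    have hy : y ^ (p - 1 - 1) * y = y ^ (p - 1) := by
      rw [← rpow_add_one hy0.ne']; ring_nf
    nlinarith

end Real

section
variable {n : Type*} [Fintype n] [DecidableEq n] {C : Matrix n n ℂ} {p : ℝ}

lemma Matrix.continuousOn_spectrum_real (A : Matrix n n ℂ) (f : ℝ → ℝ) :
    ContinuousOn f (spectrum ℝ A) :=
  A.finite_real_spectrum.continuousOn f

lemma isSelfAdjoint_mrpow (A : Matrix n n ℂ) (r : ℝ) : IsSelfAdjoint (mrpow A r) :=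
  cfc_predicate _ A

lemma mrpow_add {A : Matrix n n ℂ} (hA : A.PosDef) (r s : ℝ) :
    mrpow A (r + s) = mrpow A r * mrpow A s := by
  rw [mrpow, mrpow, mrpow, ← cfc_mul _ _ A (A.continuousOn_spectrum_real _)
    (A.continuousOn_spectrum_real _)]
  exact cfc_congr fun t ht => Real.rpow_add (hA.isStrictlyPositive.spectrum_pos ht) r s

lemma mrpow_zero {A : Matrix n n ℂ} (hA : IsSelfAdjoint A) : mrpow A 0 = 1 := by
  simpa [mrpow] using cfc_const_one ℝ A

lemma mrpow_one {A : Matrix n n ℂ} (hA : IsSelfAdjoint A) : mrpow A 1 = A := by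
  simpa [mrpow] using cfc_id' ℝ A

lemma mrpow_half_mul_self {A : Matrix n n ℂ} (hA : A.PosDef) :
    mrpow A (1 / 2) * mrpow A (1 / 2) = A := by
  rw [← mrpow_add hA, add_halves, mrpow_one hA.isHermitian]

lemma mrpow_half_mul_mrpow_neg_half {A : Matrix n n ℂ} (hA : A.PosDef) :
    mrpow A (1 / 2) * mrpow A (-(1 / 2)) = 1 := by
  rw [← mrpow_add hA, add_neg_cancel, mrpow_zero hA.isHermitian]

lemma mrpow_neg_half_mul_mrpow_half {A : Matrix n n ℂ} (hA : A.PosDef) :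
    mrpow A (-(1 / 2)) * mrpow A (1 / 2) = 1 := by
  rw [← mrpow_add hA, neg_add_cancel, mrpow_zero hA.isHermitian]

lemma one_le_mrpow_neg_half_mul_mul {A B : Matrix n n ℂ} (hA : A.PosDef) (hAB : A ≤ B) :
    1 ≤ mrpow A (-(1 / 2)) * B * mrpow A (-(1 / 2)) := by
  have hA1 : mrpow A (-(1 / 2)) * A * mrpow A (-(1 / 2)) = 1 := calc
    _ = mrpow A (-(1 / 2)) * (mrpow A (1 / 2) * mrpow A (1 / 2)) * mrpow A (-(1 / 2)) := by
      rw [mrpow_half_mul_self hA]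
    _ = 1 := by
      rw [mul_assoc, mul_assoc, mrpow_half_mul_mrpow_neg_half hA, mul_one,
        mrpow_neg_half_mul_mrpow_half hA]
  exact hA1 ▸ (isSelfAdjoint_mrpow A (-(1 / 2))).conjugate_le_conjugate hAB

lemma smul_mrpow_sub_one_eq_cfc (hC : IsSelfAdjoint C) :
    (1 / p : ℝ) • (mrpow C p - 1) = cfc (fun t : ℝ => 1 / p * (t ^ p - 1)) C := by
  have hc := C.continuousOn_spectrum_real
  rw [cfc_const_mul _ _ C (hc _), cfc_sub _ _ C (hc _) (hc _), cfc_const_one ℝ C]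
  rfl

lemma mrpow_half_smul_add_one_mul_sub_one_eq_cfc (hC : IsSelfAdjoint C) :
    mrpow ((1 / 2 : ℝ) • (C + 1)) (p - 1) * (C - 1) =
      cfc (fun t : ℝ => (1 / 2 * (t + 1)) ^ (p - 1) * (t - 1)) C := by
  have hc := C.continuousOn_spectrum_real
  rw [cfc_mul _ _ C (hc _) (hc _), cfc_comp' (fun s : ℝ => s ^ (p - 1)) _ C
    ((C.finite_real_spectrum.image _).continuousOn _) (hc _), cfc_const_mul _ _ C (hc _),
    cfc_add_const _ _ C (hc _), cfc_sub _ _ C (hc _) (hc _), cfc_id' ℝ C, cfc_const_one ℝ C,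
    Algebra.algebraMap_eq_smul_one, one_smul]
  rfl

lemma mrpow_half_smul_add_one_mul_sub_one_le (hC : 1 ≤ C) (hp0 : 0 < p) (hp1 : p ≤ 1) :
    mrpow ((1 / 2 : ℝ) • (C + 1)) (p - 1) * (C - 1) ≤ (1 / p : ℝ) • (mrpow C p - 1) := by
  have hCsa : IsSelfAdjoint C := .of_ge hC (.one _)
  rw [mrpow_half_smul_add_one_mul_sub_one_eq_cfc hCsa, smul_mrpow_sub_one_eq_cfc hCsa]
  refine cfc_mono (fun t ht => ?_) (C.continuousOn_spectrum_real _)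
    (C.continuousOn_spectrum_real _)
  simpa only [one_div_mul_eq_div] using
    Real.half_add_one_rpow_mul_sub_one_le hp0 hp1 ((CFC.one_le_iff C).1 hC t ht)

lemma smul_mrpow_sub_mrpow_add_sub_one_eq_cfc (hC : IsSelfAdjoint C) :
    (1 / 2 : ℝ) • (mrpow C p - mrpow C (p - 1) + C - 1) =
      cfc (fun t : ℝ => 1 / 2 * (t ^ p - t ^ (p - 1) + t - 1)) C := by
  have hc := C.continuousOn_spectrum_real
  rw [cfc_const_mul _ _ C (hc _), cfc_sub _ _ C (hc _) (hc _),
    cfc_add C (fun t : ℝ => t ^ p - t ^ (p - 1)) (fun t => t) (hc _) (hc _),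
    cfc_sub _ _ C (hc _) (hc _), cfc_id' ℝ C, cfc_const_one ℝ C]
  rfl

lemma smul_mrpow_sub_one_le (hC : 1 ≤ C) (hp0 : 0 < p) (hp1 : p ≤ 1) :
    (1 / p : ℝ) • (mrpow C p - 1) ≤ (1 / 2 : ℝ) • (mrpow C p - mrpow C (p - 1) + C - 1) := by
  have hCsa : IsSelfAdjoint C := .of_ge hC (.one _)
  rw [smul_mrpow_sub_one_eq_cfc hCsa, smul_mrpow_sub_mrpow_add_sub_one_eq_cfc hCsa]
  refine cfc_mono (fun t ht => ?_) (C.continuousOn_spectrum_real _)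
    (C.continuousOn_spectrum_real _)
  simpa only [one_div_mul_eq_div] using
    Real.rpow_sub_one_div_le_half_rpow_sub_rpow_add hp0 hp1 ((CFC.one_le_iff C).1 hC t ht)

end

theorem stmt7_general {n : Type*} [Fintype n] [DecidableEq n] {A B : Matrix n n ℂ}
    (hA : A.PosDef) (hAB : loe A B)
    {p : ℝ} (hp0 : 0 < p) (hp1 : p ≤ 1) :
    loe (Kp A B p) (TsallisEntropy A B p) ∧
    loe (TsallisEntropy A B p)
      ((1 / 2 : ℝ) • (natu A B p - natu A B (p - 1) + B - A)) := by
  set C := mrpow A (-(1 / 2)) * B * mrpow A (-(1 / 2))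
  have hC : 1 ≤ C := one_le_mrpow_neg_half_mul_mul hA hAB
  let Φ := LinearMap.mulLeftRight ℝ (mrpow A (1 / 2), mrpow A (1 / 2))
  have hΦ_mono : ∀ {X Y}, X ≤ Y → Φ X ≤ Φ Y := fun h =>
    (isSelfAdjoint_mrpow A (1 / 2)).conjugate_le_conjugate h
  have hΦA : Φ 1 = A := by
    simp only [Φ, LinearMap.mulLeftRight_apply, mul_one, mrpow_half_mul_self hA]
  have hΦB : Φ C = B := by
    simp only [Φ, C, LinearMap.mulLeftRight_apply, ← mul_assoc, mrpow_half_mul_mrpow_neg_half hA,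
      one_mul]
    rw [mul_assoc, mrpow_neg_half_mul_mrpow_half hA, mul_one]
  have hT : TsallisEntropy A B p = Φ ((1 / p : ℝ) • (mrpow C p - 1)) := by
    rw [map_smul, map_sub, hΦA]; rfl
  have hK : Kp A B p = Φ (mrpow ((1 / 2 : ℝ) • (C + 1)) (p - 1) * (C - 1)) := by
    simp only [Kp, Φ, C, LinearMap.mulLeftRight_apply, mul_assoc]
  have hR : (1 / 2 : ℝ) • (natu A B p - natu A B (p - 1) + B - A) =
      Φ ((1 / 2 : ℝ) • (mrpow C p - mrpow C (p - 1) + C - 1)) := by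
    rw [map_smul, map_sub, map_add, map_sub, hΦA, hΦB]; rfl
  rw [loe, loe, ← Matrix.le_iff, ← Matrix.le_iff, hT, hK, hR]
  exact ⟨hΦ_mono (mrpow_half_smul_add_one_mul_sub_one_le hC hp0 hp1),
    hΦ_mono (smul_mrpow_sub_one_le hC hp0 hp1)⟩

theorem stmt7 {n : Type*} [Fintype n] [DecidableEq n] {A B : Matrix n n ℂ}
    (hA : A.PosDef) (hB : B.PosDef) (hAB : loe A B)
    {p : ℝ} (hp0 : 0 < p) (hp1 : p ≤ 1) :
    loe (Kp A B p) (TsallisEntropy A B p) ∧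
    loe (TsallisEntropy A B p)
      ((1 / 2 : ℝ) • (natu A B p - natu A B (p - 1) + B - A)) :=
  stmt7_general hA hAB hp0 hp1
end

section
/- Let A and B be n×n complex positive definite matrices and let h, h' be reals with 0 < h ≤ h' < 1 such that h·A ≤ B ≤ h'·A in the Loewner order (equivalently h·I ≤ A^{−1/2} B A^{−1/2} ≤ h'·I). Then for every p ∈ [0,1], with r := min{p, 1−p} and R := max{p, 1−p}, one has K(h',2)^r · (A #_p B) ≤ A ∇_p B ≤ K(h,2)^R · (A #_p B) in the Loewner order. -/
open Matrix ComplexOrder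

/-!
Conjugating by `A^{-1/2}` turns the hypotheses into `h ≤ C ≤ h'` for `C = A^{-1/2} B A^{-1/2}`,
i.e. `spectrum C ⊆ [h, h']`, and conjugating back by `A^{1/2}` turns `(1 - p) + p C` and `C^p` into
`A ∇_p B` and `A #_p B`. By monotonicity of the functional calculus it thus suffices to prove
`K(h')^r t^p ≤ 1 - p + p t ≤ K(h)^R t^p` for real `t ∈ [h, h']`. As `K` is antitone on `(0, 1]`,
`K(h')` and `K(h)` may be replaced by `K(t)`, and `K(t)^q t^q = ((1 + t) / 2)^(2q)`: for the
exponent `p` both bounds are Bernoulli's inequality with exponent `2p` (at most `1` for the lower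
bound, at least `1` for the upper one), and the symmetry `K(t⁻¹) = K(t)` exchanges `p` and `1 - p`.
-/

open Set
open scoped MatrixOrder

noncomputable def kantorovich (t : ℝ) : ℝ := (t + 1) ^ (2 : ℕ) / (4 * t)

lemma kantorovich_inv (t : ℝ) : kantorovich t⁻¹ = kantorovich t := by
  rcases eq_or_ne t 0 with rfl | ht
  · simp
  · unfold kantorovich
    field_simp
    ring

lemma kantorovich_nonneg {t : ℝ} (ht : 0 ≤ t) : 0 ≤ kantorovich t := by
  unfold kantorovich
  positivity

lemma kantorovich_mul_self {t : ℝ} (ht : t ≠ 0) : kantorovich t * t = ((t + 1) / 2) ^ (2 : ℕ) := by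
  unfold kantorovich
  field_simp
  norm_num

lemma kantorovich_rpow_mul_rpow {t : ℝ} (ht : 0 < t) (q : ℝ) :
    kantorovich t ^ q * t ^ q = ((t + 1) / 2) ^ (2 * q) := by
  rw [← Real.mul_rpow (kantorovich_nonneg ht.le) ht.le, kantorovich_mul_self ht.ne',
    show 2 * q = ((2 : ℕ) : ℝ) * q by norm_num, Real.rpow_natCast_mul (by positivity)]

lemma kantorovich_rpow_mul_rpow_le {t p : ℝ} (ht : 0 < t) (hp0 : 0 ≤ p) (hp : p ≤ 1 / 2) :
    kantorovich t ^ p * t ^ p ≤ 1 - p + p * t := by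
  have := rpow_one_add_le_one_add_mul_self (s := (t - 1) / 2) (p := 2 * p)
    (by linarith) (by linarith) (by linarith)
  rw [kantorovich_rpow_mul_rpow ht]
  convert this using 1 <;> ring_nf

lemma le_kantorovich_rpow_mul_rpow {t p : ℝ} (ht : 0 < t) (hp : 1 / 2 ≤ p) :
    1 - p + p * t ≤ kantorovich t ^ p * t ^ p := by
  have := one_add_mul_self_le_rpow_one_add (s := (t - 1) / 2) (p := 2 * p)
    (by linarith) (by linarith)
  rw [kantorovich_rpow_mul_rpow ht]
  convert this using 1 <;> ring_nf

lemma kantorovich_rpow_mul_rpow_eq_mul_inv {t : ℝ} (ht : 0 < t) (q p : ℝ) :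
    kantorovich t ^ q * t ^ p = t * (kantorovich t⁻¹ ^ q * t⁻¹ ^ (1 - p)) := by
  rw [kantorovich_inv, Real.inv_rpow ht.le, Real.rpow_sub ht, Real.rpow_one]
  field_simp

lemma one_sub_add_mul_eq_mul_inv {t : ℝ} (ht : 0 < t) (p : ℝ) :
    1 - p + p * t = t * (1 - (1 - p) + (1 - p) * t⁻¹) := by
  field_simp
  ring

lemma kantorovich_rpow_min_mul_rpow_le {t p : ℝ} (ht : 0 < t) (hp0 : 0 ≤ p) (hp1 : p ≤ 1) :
    kantorovich t ^ min p (1 - p) * t ^ p ≤ 1 - p + p * t := by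
  rcases le_total p (1 / 2) with hp | hp
  · rw [min_eq_left (by linarith)]
    exact kantorovich_rpow_mul_rpow_le ht hp0 hp
  · rw [min_eq_right (by linarith), kantorovich_rpow_mul_rpow_eq_mul_inv ht,
      one_sub_add_mul_eq_mul_inv ht]
    gcongr
    exact kantorovich_rpow_mul_rpow_le (inv_pos.2 ht) (by linarith) (by linarith)

lemma le_kantorovich_rpow_max_mul_rpow {t p : ℝ} (ht : 0 < t) :
    1 - p + p * t ≤ kantorovich t ^ max p (1 - p) * t ^ p := by
  rcases le_total p (1 / 2) with hp | hp
  · rw [max_eq_right (by linarith), kantorovich_rpow_mul_rpow_eq_mul_inv ht,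
      one_sub_add_mul_eq_mul_inv ht]
    gcongr
    exact le_kantorovich_rpow_mul_rpow (inv_pos.2 ht) (by linarith)
  · rw [max_eq_left (by linarith)]
    exact le_kantorovich_rpow_mul_rpow ht hp

lemma kantorovich_antitoneOn : AntitoneOn kantorovich (Ioc 0 1) := by
  rintro s ⟨hs, -⟩ t ⟨ht, ht1⟩ hst
  unfold kantorovich
  rw [div_le_div_iff₀ (by positivity) (by positivity)]
  nlinarith [mul_nonneg (sub_nonneg.2 hst) (sub_nonneg.2 (show s * t ≤ 1 by nlinarith))]

lemma kantorovich_bounds_of_mem_Icc {h h' t p : ℝ} (hh : 0 < h) (hh' : h' ≤ 1)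
    (ht : t ∈ Icc h h') (hp0 : 0 ≤ p) (hp1 : p ≤ 1) :
    kantorovich h' ^ min p (1 - p) * t ^ p ≤ 1 - p + p * t ∧
      1 - p + p * t ≤ kantorovich h ^ max p (1 - p) * t ^ p := by
  have ht0 : 0 < t := hh.trans_le ht.1
  constructor
  · refine le_trans ?_ (kantorovich_rpow_min_mul_rpow_le ht0 hp0 hp1)
    refine mul_le_mul_of_nonneg_right (Real.rpow_le_rpow (kantorovich_nonneg (ht0.le.trans ht.2)) ?_
      (le_min hp0 (by linarith))) (Real.rpow_nonneg ht0.le p)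
    exact kantorovich_antitoneOn ⟨ht0, ht.2.trans hh'⟩ ⟨ht0.trans_le ht.2, hh'⟩ ht.2
  · refine (le_kantorovich_rpow_max_mul_rpow ht0).trans ?_
    refine mul_le_mul_of_nonneg_right (Real.rpow_le_rpow (kantorovich_nonneg ht0.le) ?_
      (hp0.trans (le_max_left _ _))) (Real.rpow_nonneg ht0.le p)
    exact kantorovich_antitoneOn ⟨hh, ht.1.trans (ht.2.trans hh')⟩ ⟨ht0, ht.2.trans hh'⟩ ht.1

section FunctionalCalculus

variable {A : Type*} [Ring A] [StarRing A] [TopologicalSpace A] [Algebra ℝ A]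
  [ContinuousFunctionalCalculus ℝ A IsSelfAdjoint]

lemma cfc_const_add_mul_id (α β : ℝ) (c : A) (hc : IsSelfAdjoint c := by cfc_tac) :
    cfc (fun t : ℝ => α + β * t) c = α • 1 + β • c := by
  rw [cfc_const_add α _ c, cfc_const_mul_id β c, Algebra.algebraMap_eq_smul_one]

variable [PartialOrder A] [StarOrderedRing A] [NonnegSpectrumClass ℝ A]

lemma kantorovich_bounds_of_algebraMap_le [StarModule ℝ A] {c : A} {h h' p : ℝ}
    (hl : algebraMap ℝ A h ≤ c) (hu : c ≤ algebraMap ℝ A h') (hh : 0 < h) (hh' : h' ≤ 1)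
    (hp0 : 0 ≤ p) (hp1 : p ≤ 1) :
    kantorovich h' ^ min p (1 - p) • cfc (fun t : ℝ => t ^ p) c ≤ (1 - p) • 1 + p • c ∧
      (1 - p) • 1 + p • c ≤ kantorovich h ^ max p (1 - p) • cfc (fun t : ℝ => t ^ p) c := by
  have hc : IsSelfAdjoint c := .of_ge hl (.algebraMap A (.all h))
  have hspec : spectrum ℝ c ⊆ Icc h h' := fun t ht =>
    ⟨(algebraMap_le_iff_le_spectrum hc).1 hl t ht, (le_algebraMap_iff_spectrum_le hc).1 hu t ht⟩
  have hbounds (t) (ht : t ∈ spectrum ℝ c) :=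
    kantorovich_bounds_of_mem_Icc hh hh' (hspec ht) hp0 hp1
  have hcont : ContinuousOn (fun t : ℝ => t ^ p) (spectrum ℝ c) :=
    (Real.continuous_rpow_const hp0).continuousOn
  rw [← cfc_const_add_mul_id _ _ c, ← cfc_const_mul _ _ _ hcont, ← cfc_const_mul _ _ _ hcont]
  exact ⟨cfc_mono fun t ht => (hbounds t ht).1, cfc_mono fun t ht => (hbounds t ht).2⟩

namespace IsStrictlyPositive

variable {a : A} (ha : IsStrictlyPositive a)
include ha

lemma rpow_mul_rpow_eq_one {x y : ℝ} (hxy : x + y = 0) : a ^ x * a ^ y = 1 := by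
  rw [← CFC.rpow_add ha.isUnit, hxy, CFC.rpow_zero a]

lemma rpow_half_mul_rpow_half : a ^ (1 / 2 : ℝ) * a ^ (1 / 2 : ℝ) = a := by
  rw [← CFC.rpow_add ha.isUnit]
  norm_num [CFC.rpow_one a]

lemma rpow_neg_half_conj_smul_self (r : ℝ) :
    a ^ (-(1 / 2) : ℝ) * (r • a) * a ^ (-(1 / 2) : ℝ) = algebraMap ℝ A r := by
  nth_rw 2 [← ha.rpow_half_mul_rpow_half]
  rw [Algebra.algebraMap_eq_smul_one, mul_smul_comm, smul_mul_assoc, ← mul_assoc,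
    ha.rpow_mul_rpow_eq_one (by norm_num), one_mul, ha.rpow_mul_rpow_eq_one (by norm_num)]

lemma rpow_half_conj_rpow_neg_half_conj (b : A) :
    a ^ (1 / 2 : ℝ) * (a ^ (-(1 / 2) : ℝ) * b * a ^ (-(1 / 2) : ℝ)) * a ^ (1 / 2 : ℝ) = b := by
  simp only [← mul_assoc, ha.rpow_mul_rpow_eq_one (x := 1 / 2) (y := -(1 / 2)) (by norm_num),
    one_mul]
  rw [mul_assoc, ha.rpow_mul_rpow_eq_one (by norm_num), mul_one]

theorem kantorovich_bounds [StarModule ℝ A] {b : A} {h h' p : ℝ} (hl : h • a ≤ b)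
    (hu : b ≤ h' • a) (hh : 0 < h) (hh' : h' ≤ 1) (hp0 : 0 ≤ p) (hp1 : p ≤ 1) :
    kantorovich h' ^ min p (1 - p) • (a ^ (1 / 2 : ℝ) *
        cfc (fun t : ℝ => t ^ p) (a ^ (-(1 / 2) : ℝ) * b * a ^ (-(1 / 2) : ℝ)) * a ^ (1 / 2 : ℝ))
        ≤ (1 - p) • a + p • b ∧
      (1 - p) • a + p • b ≤ kantorovich h ^ max p (1 - p) • (a ^ (1 / 2 : ℝ) *
        cfc (fun t : ℝ => t ^ p) (a ^ (-(1 / 2) : ℝ) * b * a ^ (-(1 / 2) : ℝ)) *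
          a ^ (1 / 2 : ℝ)) := by
  set c := a ^ (-(1 / 2) : ℝ) * b * a ^ (-(1 / 2) : ℝ)
  have hs : IsSelfAdjoint (a ^ (1 / 2 : ℝ)) := .of_nonneg CFC.rpow_nonneg
  have hsi : IsSelfAdjoint (a ^ (-(1 / 2) : ℝ)) := .of_nonneg CFC.rpow_nonneg
  have hcl : algebraMap ℝ A h ≤ c := by
    simpa only [ha.rpow_neg_half_conj_smul_self] using hsi.conjugate_le_conjugate hl
  have hcu : c ≤ algebraMap ℝ A h' := by
    simpa only [ha.rpow_neg_half_conj_smul_self] using hsi.conjugate_le_conjugate hu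
  have hmean :
      (1 - p) • a + p • b = a ^ (1 / 2 : ℝ) * ((1 - p) • 1 + p • c) * a ^ (1 / 2 : ℝ) := by
    rw [mul_add, add_mul, mul_smul_comm, smul_mul_assoc, mul_one, ha.rpow_half_mul_rpow_half,
      mul_smul_comm, smul_mul_assoc, ha.rpow_half_conj_rpow_neg_half_conj]
  have hsmul (k : ℝ) (x : A) : k • (a ^ (1 / 2 : ℝ) * x * a ^ (1 / 2 : ℝ)) =
      a ^ (1 / 2 : ℝ) * (k • x) * a ^ (1 / 2 : ℝ) := by
    rw [mul_smul_comm, smul_mul_assoc]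
  obtain ⟨hlow, hupp⟩ := kantorovich_bounds_of_algebraMap_le hcl hcu hh hh' hp0 hp1
  rw [hmean, hsmul, hsmul]
  exact ⟨hs.conjugate_le_conjugate hlow, hs.conjugate_le_conjugate hupp⟩

end IsStrictlyPositive

end FunctionalCalculus

lemma loe_iff_le {n : Type*} [Fintype n] {X Y : Matrix n n ℂ} : loe X Y ↔ X ≤ Y :=
  Matrix.le_iff.symm

theorem stmt13_general {n : Type*} [Fintype n] [DecidableEq n] {A B : Matrix n n ℂ}
    (hA : A.PosDef) {h h' : ℝ} (hh0 : 0 < h) (hh'1 : h' < 1)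
    (hlow : loe (h • A) B) (hup : loe B (h' • A))
    {p : ℝ} (hp0 : 0 ≤ p) (hp1 : p ≤ 1) :
    loe ((((h' + 1) ^ (2 : ℕ) / (4 * h')) ^ min p (1 - p)) • natu A B p)
      ((1 - p) • A + p • B) ∧
    loe ((1 - p) • A + p • B)
      ((((h + 1) ^ (2 : ℕ) / (4 * h)) ^ max p (1 - p)) • natu A B p) := by
  have hA' := hA.isStrictlyPositive
  have hnatu : natu A B p = A ^ (1 / 2 : ℝ) *
      cfc (fun t : ℝ => t ^ p) (A ^ (-(1 / 2) : ℝ) * B * A ^ (-(1 / 2) : ℝ)) * A ^ (1 / 2 : ℝ) := by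
    simp only [natu, mrpow, ← CFC.rpow_eq_cfc_real hA'.nonneg]
  simp only [loe_iff_le, hnatu]
  exact hA'.kantorovich_bounds (loe_iff_le.1 hlow) (loe_iff_le.1 hup) hh0 hh'1.le hp0 hp1

theorem stmt13 {n : Type*} [Fintype n] [DecidableEq n] {A B : Matrix n n ℂ}
    (hA : A.PosDef) (hB : B.PosDef) {h h' : ℝ} (hh0 : 0 < h) (hhh' : h ≤ h') (hh'1 : h' < 1)
    (hlow : loe (h • A) B) (hup : loe B (h' • A))
    {p : ℝ} (hp0 : 0 ≤ p) (hp1 : p ≤ 1) :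
    loe ((((h' + 1) ^ (2 : ℕ) / (4 * h')) ^ min p (1 - p)) • natu A B p)
      ((1 - p) • A + p • B) ∧
    loe ((1 - p) • A + p • B)
      ((((h + 1) ^ (2 : ℕ) / (4 * h)) ^ max p (1 - p)) • natu A B p) :=
  stmt13_general hA hh0 hh'1 hlow hup hp0 hp1
end

section
/- Let A and B be n×n complex positive definite matrices and let p ∈ (0,1], with r := min{p, 1−p} and R := max{p, 1−p}. Then (2R/p)·(Tr[A # B] − Tr[A + B]/2) − Tr[T_p(A|B)] ≤ Tr[A − B] ≤ (2r/p)·(√(Tr[A]·Tr[B]) − Tr[A + B]/2) + D_p(A||B), where D_p(A||B) := (Tr[A] − Tr[A^{1−p} B^p])/p is the Tsallis relative entropy. -/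
open Matrix ComplexOrder

/-!
Both bounds are trace forms of the refined Young inequalities
`min p (1-p) (√a - √b)² ≤ (1-p) a + p b - a^(1-p) b^p ≤ max p (1-p) (√a - √b)²` for `a, b ≥ 0`.

For the first, diagonalise `C = A^(-1/2) B A^(-1/2)` with eigenvalues `νᵢ ≥ 0`: then
`Tr (A #ᵣ B) = ∑ wᵢ νᵢ^r` for all `r` with the same weights `wᵢ ≥ 0`, and `A`, `B`, `A # B`,
`A #ₚ B` are the cases `r = 0, 1, 1/2, p`, so the upper refinement at `a = 1, b = νᵢ` can be
summed. For the second, `Tr (A^(1-p) B^p) = ∑ᵢⱼ λᵢ^(1-p) μⱼ^p |⟪uᵢ, vⱼ⟫|²` with a doubly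
stochastic weight matrix, which Young's inequality bounds by `(Tr A)^(1-p) (Tr B)^p`; the lower
refinement at `a = Tr A, b = Tr B` finishes.
-/

namespace Real

variable {a b p : ℝ}

lemma sqrt_rpow_two_mul (ha : 0 ≤ a) (p : ℝ) : √a ^ (2 * p) = a ^ p := by
  rw [sqrt_eq_rpow, ← rpow_mul ha]
  ring_nf

lemma geom_mean_add_mul_sq_le_arith_mean_of_le_half (ha : 0 ≤ a) (hb : 0 ≤ b) (hp0 : 0 ≤ p)
    (hp : p ≤ 1 / 2) :
    a ^ (1 - p) * b ^ p + p * (√a - √b) ^ 2 ≤ (1 - p) * a + p * b := by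
  have amgm := geom_mean_le_arith_mean2_weighted (w₁ := 1 - 2 * p) (w₂ := 2 * p) (p₁ := a)
    (p₂ := √a * √b) (by linarith) (by linarith) ha (by positivity) (by ring)
  have hgeom : a ^ (1 - 2 * p) * (√a * √b) ^ (2 * p) = a ^ (1 - p) * b ^ p := by
    rw [mul_rpow (sqrt_nonneg a) (sqrt_nonneg b), sqrt_rpow_two_mul ha, sqrt_rpow_two_mul hb,
      ← mul_assoc, ← rpow_add' ha (by linarith)]
    ring_nf
  nlinarith [sq_sqrt ha, sq_sqrt hb]

lemma arith_mean_le_geom_mean_add_mul_sq_of_le_half (ha : 0 ≤ a) (hb : 0 ≤ b) (hp0 : 0 ≤ p)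
    (hp : p ≤ 1 / 2) :
    (1 - p) * a + p * b ≤ a ^ (1 - p) * b ^ p + (1 - p) * (√a - √b) ^ 2 := by
  have hq : 0 < 2 - 2 * p := by linarith
  have hq' : 1 - p ≠ 0 := by linarith
  have amgm := geom_mean_le_arith_mean2_weighted (w₁ := 1 / (2 - 2 * p))
    (w₂ := (1 - 2 * p) / (2 - 2 * p)) (p₁ := a ^ (1 - p) * b ^ p) (p₂ := b)
    (by positivity) (div_nonneg (by linarith) hq.le) (by positivity) hb
    (by rw [← add_div, div_eq_one_iff_eq hq.ne']; ring)
  have hexp_a : (1 - p) * (1 / (2 - 2 * p)) = 1 / 2 := by field_simp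
  have hexp_b : p * (1 / (2 - 2 * p)) + (1 - 2 * p) / (2 - 2 * p) = 1 / 2 := by field_simp; ring
  have hgeom : (a ^ (1 - p) * b ^ p) ^ (1 / (2 - 2 * p)) * b ^ ((1 - 2 * p) / (2 - 2 * p))
      = √a * √b := by
    rw [mul_rpow (by positivity) (by positivity), ← rpow_mul ha, ← rpow_mul hb, mul_assoc,
      ← rpow_add' hb (by rw [hexp_b]; norm_num), hexp_a, hexp_b, sqrt_eq_rpow, sqrt_eq_rpow]
  have hclear : (2 - 2 * p) * (1 / (2 - 2 * p) * (a ^ (1 - p) * b ^ p)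
      + (1 - 2 * p) / (2 - 2 * p) * b) = a ^ (1 - p) * b ^ p + (1 - 2 * p) * b := by
    field_simp
  rw [hgeom] at amgm
  nlinarith [mul_le_mul_of_nonneg_left amgm hq.le, sq_sqrt ha, sq_sqrt hb]

lemma geom_mean_add_min_mul_sq_le_arith_mean (ha : 0 ≤ a) (hb : 0 ≤ b) (hp0 : 0 ≤ p)
    (hp1 : p ≤ 1) :
    a ^ (1 - p) * b ^ p + min p (1 - p) * (√a - √b) ^ 2 ≤ (1 - p) * a + p * b := by
  rcases le_total p (1 / 2) with hp | hp
  · rw [min_eq_left (by linarith)]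
    exact geom_mean_add_mul_sq_le_arith_mean_of_le_half ha hb hp0 hp
  · have h := geom_mean_add_mul_sq_le_arith_mean_of_le_half hb ha (p := 1 - p) (by linarith)
      (by linarith)
    rw [min_eq_right (by linarith)]
    rw [sub_sub_cancel] at h
    linear_combination h

lemma arith_mean_le_geom_mean_add_max_mul_sq (ha : 0 ≤ a) (hb : 0 ≤ b) (hp0 : 0 ≤ p)
    (hp1 : p ≤ 1) :
    (1 - p) * a + p * b ≤ a ^ (1 - p) * b ^ p + max p (1 - p) * (√a - √b) ^ 2 := by
  rcases le_total p (1 / 2) with hp | hp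
  · rw [max_eq_right (by linarith)]
    exact arith_mean_le_geom_mean_add_mul_sq_of_le_half ha hb hp0 hp
  · have h := arith_mean_le_geom_mean_add_mul_sq_of_le_half hb ha (p := 1 - p) (by linarith)
      (by linarith)
    rw [max_eq_left (by linarith)]
    rw [sub_sub_cancel] at h
    linear_combination h

end Real

namespace Matrix

variable {n : Type*} [Fintype n] [DecidableEq n] {A B : Matrix n n ℂ}

lemma continuousOn_spectrum_real_s17 (f : ℝ → ℝ) (A : Matrix n n ℂ) :
    ContinuousOn f (spectrum ℝ A) :=
  A.finite_real_spectrum.continuousOn f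

lemma isHermitian_mrpow (A : Matrix n n ℂ) (r : ℝ) : (mrpow A r).IsHermitian :=
  cfc_predicate _ A

lemma mrpow_zero (hA : A.IsHermitian) : mrpow A 0 = 1 := by
  simp only [mrpow, Real.rpow_zero]
  exact cfc_const_one ℝ A

lemma mrpow_one (hA : A.IsHermitian) : mrpow A 1 = A := by
  simp only [mrpow, Real.rpow_one]
  exact cfc_id' ℝ A

lemma mrpow_mul_mrpow (hA : A.PosDef) (r s : ℝ) : mrpow A r * mrpow A s = mrpow A (r + s) := by
  rw [mrpow, mrpow, mrpow, ← cfc_mul _ _ A (continuousOn_spectrum_real_s17 _ A)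
    (continuousOn_spectrum_real_s17 _ A)]
  refine cfc_congr fun t ht => (Real.rpow_add ?_ r s).symm
  rw [hA.isHermitian.spectrum_real_eq_range_eigenvalues] at ht
  obtain ⟨i, rfl⟩ := ht
  exact hA.eigenvalues_pos i

lemma mul_diagonal_mul_star_apply_self (W : Matrix n n ℂ) (d : n → ℝ) (i : n) :
    (W * diagonal (fun j => (d j : ℂ)) * star W) i i =
      ∑ j, (d j : ℂ) * Complex.normSq (W i j) := by
  simp only [mul_apply, diagonal_apply, star_apply, mul_ite, mul_zero, Finset.sum_ite_eq',
    Finset.mem_univ, if_true, RCLike.star_def]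
  refine Finset.sum_congr rfl fun j _ => ?_
  rw [← Complex.mul_conj]
  ring

lemma IsHermitian.trace_cfc_mul (hA : A.IsHermitian) (f : ℝ → ℝ) (M : Matrix n n ℂ) :
    (cfc f A * M).trace = ∑ i, (f (hA.eigenvalues i) : ℂ) *
      (star (hA.eigenvectorUnitary : Matrix n n ℂ) * M * hA.eigenvectorUnitary) i i := by
  rw [hA.cfc_eq, IsHermitian.cfc, Unitary.conjStarAlgAut_apply, trace_mul_comm, ← mul_assoc,
    trace_mul_cycle, ← mul_assoc]
  simp [trace, mul_comm]

lemma map_normSq_mem_doublyStochastic {W : Matrix n n ℂ} (hW : W ∈ unitaryGroup n ℂ) :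
    W.map Complex.normSq ∈ doublyStochastic ℝ n := by
  refine mem_doublyStochastic_iff_sum.mpr ⟨fun i j => Complex.normSq_nonneg _, fun i => ?_,
    fun j => ?_⟩
  · have h := congrFun₂ (mem_unitaryGroup_iff.mp hW) i i
    simp only [mul_apply, star_apply, RCLike.star_def, Complex.mul_conj, one_apply_eq] at h
    exact_mod_cast h
  · have h := congrFun₂ (mem_unitaryGroup_iff'.mp hW) j j
    simp only [mul_apply, star_apply, RCLike.star_def, mul_comm _ (W _ j), Complex.mul_conj,
      one_apply_eq] at h
    exact_mod_cast h

lemma IsHermitian.exists_trace_cfc_mul_cfc_re_eq_sum (hA : A.IsHermitian) (hB : B.IsHermitian) :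
    ∃ c ∈ doublyStochastic ℝ n, ∀ f g : ℝ → ℝ, (cfc f A * cfc g B).trace.re =
      ∑ i, ∑ j, f (hA.eigenvalues i) * g (hB.eigenvalues j) * c i j := by
  set U : Matrix n n ℂ := (hA.eigenvectorUnitary : Matrix n n ℂ)
  set V : Matrix n n ℂ := (hB.eigenvectorUnitary : Matrix n n ℂ)
  have hW : star U * V ∈ unitaryGroup n ℂ :=
    mul_mem (Unitary.star_mem (hA.eigenvectorUnitary).2) (hB.eigenvectorUnitary).2
  refine ⟨_, map_normSq_mem_doublyStochastic hW, fun f g => ?_⟩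
  have hconj : star U * cfc g B * U
      = (star U * V) * diagonal (fun j => (g (hB.eigenvalues j) : ℂ)) * star (star U * V) := by
    rw [hB.cfc_eq, IsHermitian.cfc, Unitary.conjStarAlgAut_apply, star_mul, star_star]
    simp only [mul_assoc]
    rfl
  rw [hA.trace_cfc_mul, Complex.re_sum]
  refine Finset.sum_congr rfl fun i _ => ?_
  rw [hconj, mul_diagonal_mul_star_apply_self, Complex.re_ofReal_mul, Complex.re_sum,
    Finset.mul_sum]
  refine Finset.sum_congr rfl fun j _ => ?_
  rw [← Complex.ofReal_mul, Complex.ofReal_re, map_apply]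
  ring

lemma sum_sum_rpow_mul_rpow_mul_le {c : Matrix n n ℝ} (hc : c ∈ doublyStochastic ℝ n)
    {x y : n → ℝ} (hx : ∀ i, 0 < x i) (hy : ∀ j, 0 < y j) {p : ℝ} (hp0 : 0 ≤ p) (hp1 : p ≤ 1) :
    ∑ i, ∑ j, x i ^ (1 - p) * y j ^ p * c i j ≤ (∑ i, x i) ^ (1 - p) * (∑ j, y j) ^ p := by
  rcases isEmpty_or_nonempty n with hn | hn
  · simp only [Finset.univ_eq_empty, Finset.sum_empty]
    positivity
  set a := ∑ i, x i
  set b := ∑ j, y j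
  have ha : 0 < a := Finset.sum_pos (fun i _ => hx i) Finset.univ_nonempty
  have hb : 0 < b := Finset.sum_pos (fun j _ => hy j) Finset.univ_nonempty
  have hyoung (i j : n) : x i ^ (1 - p) * y j ^ p
      ≤ a ^ (1 - p) * b ^ p * ((1 - p) * (x i / a) + p * (y j / b)) := by
    have amgm := Real.geom_mean_le_arith_mean2_weighted (w₁ := 1 - p) (w₂ := p)
      (p₁ := x i / a) (p₂ := y j / b) (by linarith) hp0 (div_pos (hx i) ha).le
      (div_pos (hy j) hb).le (by ring)
    rw [Real.div_rpow (hx i).le ha.le, Real.div_rpow (hy j).le hb.le] at amgm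
    calc x i ^ (1 - p) * y j ^ p
        = a ^ (1 - p) * b ^ p * (x i ^ (1 - p) / a ^ (1 - p) * (y j ^ p / b ^ p)) := by
          field_simp
      _ ≤ _ := by gcongr
  have hweights : ∑ i, ∑ j, ((1 - p) * (x i / a) + p * (y j / b)) * c i j = 1 := by
    simp only [add_mul, Finset.sum_add_distrib, mul_assoc, ← Finset.mul_sum]
    rw [Finset.sum_comm (f := fun i j => y j / b * c i j)]
    simp only [← Finset.mul_sum, sum_row_of_mem_doublyStochastic hc,
      sum_col_of_mem_doublyStochastic hc, mul_one, ← Finset.sum_div]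
    field_simp
    ring
  calc ∑ i, ∑ j, x i ^ (1 - p) * y j ^ p * c i j
      ≤ ∑ i, ∑ j, a ^ (1 - p) * b ^ p * ((1 - p) * (x i / a) + p * (y j / b)) * c i j :=
        Finset.sum_le_sum fun i _ => Finset.sum_le_sum fun j _ =>
          mul_le_mul_of_nonneg_right (hyoung i j) (nonneg_of_mem_doublyStochastic hc)
    _ = a ^ (1 - p) * b ^ p * ∑ i, ∑ j, ((1 - p) * (x i / a) + p * (y j / b)) * c i j := by
        simp_rw [Finset.mul_sum, mul_assoc]
    _ = a ^ (1 - p) * b ^ p := by rw [hweights, mul_one]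

lemma trace_mrpow_mul_mrpow_re_le (hA : A.PosDef) (hB : B.PosDef) {p : ℝ} (hp0 : 0 ≤ p)
    (hp1 : p ≤ 1) :
    (mrpow A (1 - p) * mrpow B p).trace.re ≤ A.trace.re ^ (1 - p) * B.trace.re ^ p := by
  obtain ⟨c, hc, htrace⟩ := hA.isHermitian.exists_trace_cfc_mul_cfc_re_eq_sum hB.isHermitian
  rw [mrpow, mrpow, htrace, hA.isHermitian.trace_eq_sum_eigenvalues,
    hB.isHermitian.trace_eq_sum_eigenvalues]
  simp only [Complex.re_sum]
  exact sum_sum_rpow_mul_rpow_mul_le hc hA.eigenvalues_pos hB.eigenvalues_pos hp0 hp1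

lemma isHermitian_mrpow_mul_mul_mrpow (hB : B.IsHermitian) (r : ℝ) :
    (mrpow A r * B * mrpow A r).IsHermitian := by
  simpa only [(isHermitian_mrpow A r).eq] using isHermitian_conjTranspose_mul_mul (mrpow A r) hB

lemma PosSemidef.mrpow_mul_mul_mrpow (hB : B.PosSemidef) (r : ℝ) :
    (mrpow A r * B * mrpow A r).PosSemidef := by
  simpa only [(isHermitian_mrpow A r).eq] using hB.conjTranspose_mul_mul_same (mrpow A r)

lemma mrpow_half_mul_mrpow_half (hA : A.PosDef) : mrpow A (1 / 2) * mrpow A (1 / 2) = A := by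
  rw [mrpow_mul_mrpow hA, add_halves, mrpow_one hA.isHermitian]

lemma natu_zero (hA : A.PosDef) (hB : B.IsHermitian) : natu A B 0 = A := by
  rw [natu, mrpow_zero (isHermitian_mrpow_mul_mul_mrpow hB _), mul_one,
    mrpow_half_mul_mrpow_half hA]

lemma natu_one (hA : A.PosDef) (hB : B.IsHermitian) : natu A B 1 = B := by
  have hcancel : mrpow A (1 / 2) * mrpow A (-(1 / 2)) = 1 := by
    rw [mrpow_mul_mrpow hA, add_neg_cancel, mrpow_zero hA.isHermitian]
  rw [natu, mrpow_one (isHermitian_mrpow_mul_mul_mrpow hB _)]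
  simp only [← mul_assoc]
  rw [hcancel, one_mul, mul_assoc, mrpow_mul_mrpow hA, neg_add_cancel,
    mrpow_zero hA.isHermitian, mul_one]

lemma exists_trace_natu_re_eq_sum (hA : A.PosDef) (hB : B.PosSemidef) :
    ∃ w ν : n → ℝ, (∀ i, 0 ≤ w i) ∧ (∀ i, 0 ≤ ν i) ∧
      ∀ r, (natu A B r).trace.re = ∑ i, w i * ν i ^ r := by
  have hC := hB.mrpow_mul_mul_mrpow (A := A) (-(1 / 2))
  set U : Matrix n n ℂ := (hC.isHermitian.eigenvectorUnitary : Matrix n n ℂ)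
  refine ⟨fun i => ((star U * A * U) i i).re, hC.isHermitian.eigenvalues, fun i => ?_,
    hC.eigenvalues_nonneg, fun r => ?_⟩
  · have hAU : (star U * A * U).PosSemidef := by
      simpa only [star_eq_conjTranspose] using hA.posSemidef.conjTranspose_mul_mul_same U
    exact (Complex.nonneg_iff.mp hAU.diag_nonneg).1
  · rw [natu, trace_mul_cycle, mrpow_half_mul_mrpow_half hA, trace_mul_comm, mrpow,
      hC.isHermitian.trace_cfc_mul, Complex.re_sum]
    simp only [Complex.re_ofReal_mul]
    exact Finset.sum_congr rfl fun i _ => mul_comm _ _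

lemma trace_re_le_trace_natu_add (hA : A.PosDef) (hB : B.PosSemidef) {p : ℝ} (hp0 : 0 ≤ p)
    (hp1 : p ≤ 1) :
    (1 - p) * A.trace.re + p * B.trace.re ≤ (natu A B p).trace.re +
      max p (1 - p) * (A.trace.re - 2 * (natu A B (1 / 2)).trace.re + B.trace.re) := by
  obtain ⟨w, ν, hw, hν, htrace⟩ := exists_trace_natu_re_eq_sum hA hB
  have hA_sum : A.trace.re = ∑ i, w i * ν i ^ (0 : ℝ) := by
    rw [← htrace, natu_zero hA hB.isHermitian]
  have hB_sum : B.trace.re = ∑ i, w i * ν i ^ (1 : ℝ) := by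
    rw [← htrace, natu_one hA hB.isHermitian]
  have hterm (i : n) : (1 - p) * (w i * ν i ^ (0 : ℝ)) + p * (w i * ν i ^ (1 : ℝ))
      ≤ w i * ν i ^ p + max p (1 - p) * (w i * ν i ^ (0 : ℝ)
        - 2 * (w i * ν i ^ (1 / 2 : ℝ)) + w i * ν i ^ (1 : ℝ)) := by
    have h := Real.arith_mean_le_geom_mean_add_max_mul_sq zero_le_one (hν i) hp0 hp1
    have hsq : (1 - √(ν i)) ^ 2 = 1 - 2 * √(ν i) + ν i := by
      rw [sub_sq, Real.sq_sqrt (hν i)]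
      ring
    rw [Real.one_rpow, one_mul, Real.sqrt_one, hsq] at h
    rw [Real.rpow_zero, Real.rpow_one, ← Real.sqrt_eq_rpow]
    linarith [mul_le_mul_of_nonneg_left h (hw i)]
  rw [hA_sum, hB_sum, htrace, htrace]
  simpa only [Finset.sum_add_distrib, Finset.sum_sub_distrib, ← Finset.mul_sum] using
    Finset.sum_le_sum fun i (_ : i ∈ Finset.univ) => hterm i

end Matrix

theorem stmt17 {n : Type*} [Fintype n] [DecidableEq n] {A B : Matrix n n ℂ}
    (hA : A.PosDef) (hB : B.PosDef) {p : ℝ} (hp0 : 0 < p) (hp1 : p ≤ 1) :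
    (2 * max p (1 - p) / p) *
        (((natu A B (1 / 2)).trace).re - ((A + B).trace).re / 2)
      - ((TsallisEntropy A B p).trace).re
      ≤ ((A - B).trace).re ∧
    ((A - B).trace).re
      ≤ (2 * min p (1 - p) / p) *
          (Real.sqrt ((A.trace).re * (B.trace).re) - ((A + B).trace).re / 2)
        + ((A.trace).re - ((mrpow A (1 - p) * mrpow B p).trace).re) / p := by
  have hA_nonneg : 0 ≤ A.trace.re := (Complex.nonneg_iff.mp hA.posSemidef.trace_nonneg).1
  have hB_nonneg : 0 ≤ B.trace.re := (Complex.nonneg_iff.mp hB.posSemidef.trace_nonneg).1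
  have hreverse := trace_re_le_trace_natu_add hA hB.posSemidef hp0.le hp1
  have hholder := trace_mrpow_mul_mrpow_re_le hA hB hp0.le hp1
  have hyoung := Real.geom_mean_add_min_mul_sq_le_arith_mean hA_nonneg hB_nonneg hp0.le hp1
  rw [sub_sq, Real.sq_sqrt hA_nonneg, Real.sq_sqrt hB_nonneg] at hyoung
  have hTsallis : (TsallisEntropy A B p).trace.re = ((natu A B p).trace.re - A.trace.re) / p := by
    rw [TsallisEntropy, trace_smul, Complex.real_smul, Complex.re_ofReal_mul, trace_sub,
      Complex.sub_re, one_div_mul_eq_div]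
  rw [hTsallis, Real.sqrt_mul hA_nonneg]
  simp only [trace_add, trace_sub, Complex.add_re, Complex.sub_re]
  constructor
  · rw [div_mul_eq_mul_div, ← sub_div, div_le_iff₀ hp0]
    linarith
  · rw [div_mul_eq_mul_div, ← add_div, le_div_iff₀ hp0]
    linarith
end
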